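/- arXiv:0907.0927 — 6 statements merged into one kernel-verified Lean document; each statement's English description precedes it below -/
import Mathlib

section
/- Let K ≥ 1 and let A and B be finite nonempty sets in some ambient group such that B is symmetric (B = B⁻¹), |A·B| ≤ K|B|, |B·A| ≤ K|B|, and |B²| ≤ K|A|. Then A is 2K-controlled by B²; that is, |B²| ≤ 2K|A| and there exists a set X with |X| ≤ 2K such that A ⊆ (X·B²) ∩ (B²·X). -/
/-!
Ruzsa's covering lemma, applied to `A, B` and (after inverting) to `A⁻¹, B⁻¹`, covers `A` by at most
`K` left translates of `B / B` and by at most `K` right translates of `B⁻¹ * B`. Both sets equal `B * B`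
when `B` is symmetric, so the union of the two sets of translates works.
-/

open Finset Pointwise

theorem Finset.ruzsa_covering_mul_right {G : Type*} [Group G] [DecidableEq G] {K : ℝ}
    {A B : Finset G} (hB : B.Nonempty) (hK : (#(B * A) : ℝ) ≤ K * #B) :
    ∃ F ⊆ A, #F ≤ K ∧ A ⊆ (B⁻¹ * B) * F := by
  have hK' : (#(A⁻¹ * B⁻¹) : ℝ) ≤ K * #B⁻¹ := by
    rwa [← mul_inv_rev, card_inv, card_inv]
  obtain ⟨F, hFA, hF, hAF⟩ := ruzsa_covering_mul hB.inv hK'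
  refine ⟨F⁻¹, by simpa using inv_subset_inv hFA, by rwa [card_inv], ?_⟩
  simpa [div_eq_mul_inv, mul_inv_rev, mul_assoc] using inv_subset_inv hAF

theorem ruzsa_covering_lemma_general {G : Type*} [Group G] [DecidableEq G]
    (K : ℝ) (A B : Finset G) (hB : B.Nonempty)
    (hBsymm : B = B⁻¹)
    (hAB : ((A * B).card : ℝ) ≤ K * B.card)
    (hBA : ((B * A).card : ℝ) ≤ K * B.card)
    (hB2 : ((B * B).card : ℝ) ≤ K * A.card) :
    ((B * B).card : ℝ) ≤ 2 * K * A.card ∧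
      ∃ X : Finset G, (X.card : ℝ) ≤ 2 * K ∧ A ⊆ X * (B * B) ∧ A ⊆ (B * B) * X := by
  obtain ⟨F₁, -, hF₁, hAF₁⟩ := ruzsa_covering_mul hB hAB
  obtain ⟨F₂, -, hF₂, hAF₂⟩ := ruzsa_covering_mul_right hB hBA
  rw [div_eq_mul_inv, ← hBsymm] at hAF₁
  rw [← hBsymm] at hAF₂
  have hX : (#(F₁ ∪ F₂) : ℝ) ≤ 2 * K :=
    calc (#(F₁ ∪ F₂) : ℝ) ≤ #F₁ + #F₂ := mod_cast card_union_le F₁ F₂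
      _ ≤ 2 * K := by linarith
  refine ⟨by linarith [(#(B * B)).cast_nonneg (α := ℝ)], F₁ ∪ F₂, hX,
    hAF₁.trans (mul_subset_mul_right subset_union_left),
    hAF₂.trans (mul_subset_mul_left subset_union_right)⟩

theorem ruzsa_covering_lemma {G : Type*} [Group G] [DecidableEq G]
    (K : ℝ) (hK : 1 ≤ K) (A B : Finset G) (hA : A.Nonempty) (hB : B.Nonempty)
    (hBsymm : B = B⁻¹)
    (hAB : ((A * B).card : ℝ) ≤ K * B.card)
    (hBA : ((B * A).card : ℝ) ≤ K * B.card)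
    (hB2 : ((B * B).card : ℝ) ≤ K * A.card) :
    ((B * B).card : ℝ) ≤ 2 * K * A.card ∧
      ∃ X : Finset G, (X.card : ℝ) ≤ 2 * K ∧ A ⊆ X * (B * B) ∧ A ⊆ (B * B) * X :=
  ruzsa_covering_lemma_general K A B hB hBsymm hAB hBA hB2
end

section
/- There exists an absolute constant C > 0 with the following property. Let G be a group, let H ≤ G be a subgroup of finite index r, let K ≥ 1, and let A ⊆ G be a finite K-approximate group. Then there exists an (rK)^C-approximate group S ⊆ H which (rK)^C-controls A. -/
open Finset Pointwise

/-- `A` is a `K`-approximate group. -/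
def IsApproxGroup {G : Type*} [Group G] [DecidableEq G] (K : ℝ) (A : Finset G) : Prop :=
  (∀ a ∈ A, a⁻¹ ∈ A) ∧ (1 : G) ∈ A ∧
    ∃ X : Finset G, (∀ x ∈ X, x⁻¹ ∈ X) ∧ X ⊆ A * A ∧ (X.card : ℝ) ≤ K ∧ A * A ⊆ X * A

/-- `B` `K`-controls `A`. -/
def Controls {G : Type*} [Group G] [DecidableEq G] (K : ℝ) (B A : Finset G) : Prop :=
  (B.card : ℝ) ≤ K * A.card ∧ ∃ X : Finset G, (X.card : ℝ) ≤ K ∧ A ⊆ X * B ∧ A ⊆ B * X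

/-! If `H = G`, `A` itself works. Otherwise take `S = A² ∩ H`. Its square lies in `A⁴`, which is
covered by `K³` left translates of `A`; picking a point `z` of `S²` in each translate meeting it,
every `p ∈ S²` satisfies `z⁻¹ p ∈ A⁻¹A ∩ H = S`, so `S² ⊆ ZS` with `|Z| ≤ K³`, and `Z ∪ Z⁻¹`
witnesses that `S` is a `2K³`-approximate group. Choosing in `A` one representative of each of
the at most `r` cosets `aH` gives `A ⊆ ZS`, hence `A ⊆ SZ⁻¹` by symmetry, while
`|S| ≤ |A²| ≤ K|A|`. -/

namespace Finset

lemma exists_subset_card_le_card_image_forall_exists_eq {α β : Type*} [DecidableEq β]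
    (s : Finset α) (f : α → β) :
    ∃ u ⊆ s, #u ≤ #(s.image f) ∧ ∀ a ∈ s, ∃ z ∈ u, f z = f a := by
  obtain ⟨u, hus, hinj, himg⟩ :=
    exists_subset_injOn_image_eq_of_surjOn (f := f) s (s.image f)
      (by rw [coe_image]; exact Set.surjOn_image f s)
  refine ⟨u, mod_cast hus, by rw [← himg, card_image_of_injOn hinj], fun a ha => ?_⟩
  simpa [← himg] using mem_image_of_mem f ha

lemma exists_subset_card_le_subset_mul_inv_mul {G : Type*} [Group G] [DecidableEq G]
    {P T A : Finset G} (h : P ⊆ T * A) : ∃ Z ⊆ P, #Z ≤ #T ∧ P ⊆ Z * (A⁻¹ * A) := by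
  choose! t htT a haA hta using fun p (hp : p ∈ P) => mem_mul.1 (h hp)
  obtain ⟨Z, hZP, hZcard, hZ⟩ := exists_subset_card_le_card_image_forall_exists_eq P t
  refine ⟨Z, hZP, hZcard.trans (card_le_card (image_subset_iff.2 htT)), fun p hp => ?_⟩
  obtain ⟨z, hz, hzp⟩ := hZ p hp
  have hz' := hta z (hZP hz)
  rw [hzp] at hz'
  refine mem_mul.2 ⟨z, hz, (a z)⁻¹ * a p,
    mul_mem_mul (inv_mem_inv (haA z (hZP hz))) (haA p hp), ?_⟩
  nth_rw 1 [← hz']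
  rw [mul_assoc, mul_inv_cancel_left, hta p hp]

end Finset

section
variable {G : Type*} [Group G] [DecidableEq G] {K L : ℝ} {A B : Finset G}

lemma Controls.mono (hKL : K ≤ L) (h : Controls K B A) : Controls L B A := by
  obtain ⟨hcard, X, hXK, hXB, hBX⟩ := h
  exact ⟨hcard.trans (by gcongr), X, hXK.trans hKL, hXB, hBX⟩

lemma controls_self (hK : 1 ≤ K) : Controls K A A :=
  ⟨le_mul_of_one_le_left (by positivity) hK, {1}, by simpa using hK,
    by rw [singleton_one, one_mul], by rw [singleton_one, mul_one]⟩

namespace IsApproxGroup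

lemma mono (hKL : K ≤ L) (hA : IsApproxGroup K A) : IsApproxGroup L A := by
  obtain ⟨hinv, hone, X, hX, hXA, hXK, hAX⟩ := hA
  exact ⟨hinv, hone, X, hX, hXA, hXK.trans hKL, hAX⟩

lemma inv_eq_self (hA : IsApproxGroup K A) : A⁻¹ = A := by
  ext a
  rw [mem_inv']
  exact ⟨fun h => by simpa using hA.1 _ h, hA.1 a⟩

lemma card_mul_self_le (hA : IsApproxGroup K A) : (#(A * A) : ℝ) ≤ K * #A := by
  obtain ⟨-, -, X, -, -, hXK, hAX⟩ := hA
  calc (#(A * A) : ℝ) ≤ #(X * A) := mod_cast card_le_card hAX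
    _ ≤ #X * #A := mod_cast card_mul_le
    _ ≤ K * #A := by gcongr

lemma of_mul_self_subset {Z : Finset G} (hinv : B⁻¹ = B) (hone : 1 ∈ B) (hZB : Z ⊆ B * B)
    (hBZ : B * B ⊆ Z * B) : IsApproxGroup (2 * #Z) B := by
  refine ⟨fun b hb => by rw [← hinv]; exact inv_mem_inv hb, hone, Z ∪ Z⁻¹, ?_, ?_, ?_,
    hBZ.trans (mul_subset_mul_right subset_union_left)⟩
  · intro x hx
    simp only [mem_union, mem_inv', inv_inv] at hx ⊢
    exact hx.symm
  · refine union_subset hZB ?_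
    simpa [mul_inv_rev, hinv] using inv_subset_inv hZB
  · calc (#(Z ∪ Z⁻¹) : ℝ) ≤ #Z + #Z⁻¹ := mod_cast card_union_le _ _
      _ = 2 * #Z := by rw [card_inv]; ring

variable (H : Subgroup G) [DecidablePred (· ∈ H)]

lemma inv_filter_mem_subgroup (hA : IsApproxGroup K A) :
    {x ∈ A * A | x ∈ H}⁻¹ = {x ∈ A * A | x ∈ H} := by
  ext x
  simp [H.inv_mem_iff, hA.inv_eq_self]

lemma filter_mem_subgroup (hA : IsApproxGroup K A) :
    IsApproxGroup (2 * K ^ 3) {x ∈ A * A | x ∈ H} := by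
  set S := {x ∈ A * A | x ∈ H}
  obtain ⟨hone, X, -, -, hXK, hAX⟩ := hA.2
  have hSS : S * S ⊆ X ^ 3 * A :=
    calc S * S ⊆ A ^ 2 * A ^ 2 := by rw [sq]; gcongr <;> exact filter_subset _ _
      _ = A ^ 4 := by rw [← pow_add]
      _ ⊆ X ^ 3 * A := pow_subset_pow_mul_of_sq_subset_mul (by rwa [sq]) (by norm_num)
  obtain ⟨Z, hZS, hZX, hSZ⟩ := exists_subset_card_le_subset_mul_inv_mul hSS
  have hSSH : ∀ p ∈ S * S, p ∈ H := by
    intro p hp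
    obtain ⟨s, hs, t, ht, rfl⟩ := mem_mul.1 hp
    exact H.mul_mem (mem_filter.1 hs).2 (mem_filter.1 ht).2
  have hSZS : S * S ⊆ Z * S := by
    intro p hp
    obtain ⟨z, hz, q, hq, rfl⟩ := mem_mul.1 (hSZ hp)
    have hqH : q ∈ H := by simpa using H.mul_mem (H.inv_mem (hSSH z (hZS hz))) (hSSH _ hp)
    exact mul_mem_mul hz (mem_filter.2 ⟨by rwa [hA.inv_eq_self] at hq, hqH⟩)
  have hone' : 1 ∈ S := mem_filter.2 ⟨by simpa using mul_mem_mul hone hone, H.one_mem⟩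
  refine (of_mul_self_subset (hA.inv_filter_mem_subgroup H) hone' hZS hSZS).mono ?_
  have : (#Z : ℝ) ≤ K ^ 3 :=
    calc (#Z : ℝ) ≤ #X ^ 3 := mod_cast hZX.trans card_pow_le
      _ ≤ K ^ 3 := by gcongr
  linarith

lemma controls_filter_mem_subgroup [H.FiniteIndex] (hA : IsApproxGroup K A) :
    Controls (max K (2 * H.index)) {x ∈ A * A | x ∈ H} A := by
  set S := {x ∈ A * A | x ∈ H}
  obtain ⟨Z, hZA, hZcard, hZ⟩ :=
    exists_subset_card_le_card_image_forall_exists_eq A (QuotientGroup.mk : G → G ⧸ H)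
  have hZS : A ⊆ Z * S := by
    intro a ha
    obtain ⟨z, hz, hza⟩ := hZ a ha
    have : z⁻¹ * a ∈ S :=
      mem_filter.2 ⟨mul_mem_mul (hA.1 z (hZA hz)) ha, QuotientGroup.eq.1 hza⟩
    exact mem_mul.2 ⟨z, hz, _, this, mul_inv_cancel_left z a⟩
  have hSZ : A ⊆ S * Z⁻¹ := by
    have hSinv : S⁻¹ = S := hA.inv_filter_mem_subgroup H
    simpa [mul_inv_rev, hA.inv_eq_self, hSinv] using inv_subset_inv hZS
  have hZr : (#Z : ℝ) ≤ H.index := by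
    have : #(A.image (QuotientGroup.mk : G → G ⧸ H)) ≤ H.index := by
      rw [← Set.ncard_coe_finset]; exact Set.ncard_le_card _
    exact_mod_cast hZcard.trans this
  refine ⟨?_, Z ∪ Z⁻¹, ?_, hZS.trans (mul_subset_mul_right subset_union_left),
    hSZ.trans (mul_subset_mul_left subset_union_right)⟩
  · calc (#S : ℝ) ≤ #(A * A) := mod_cast card_le_card (filter_subset _ _)
      _ ≤ K * #A := hA.card_mul_self_le
      _ ≤ max K (2 * H.index) * #A := by gcongr; exact le_max_left _ _
  · calc (#(Z ∪ Z⁻¹) : ℝ) ≤ #Z + #Z⁻¹ := mod_cast card_union_le _ _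
      _ ≤ 2 * H.index := by rw [card_inv]; linarith
      _ ≤ max K (2 * H.index) := le_max_right _ _

end IsApproxGroup
end

theorem approx_group_passes_to_finite_index_subgroup :
    ∃ C : ℝ, 0 < C ∧
      ∀ (G : Type) [Group G] [DecidableEq G], ∀ (H : Subgroup G) (r : ℕ), 0 < r →
        H.index = r → ∀ K : ℝ, 1 ≤ K → ∀ A : Finset G, IsApproxGroup K A →
          ∃ S : Finset G, ↑S ⊆ (H : Set G) ∧
            IsApproxGroup (((r : ℝ) * K) ^ C) S ∧ Controls (((r : ℝ) * K) ^ C) S A := by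
  classical
  refine ⟨4, by norm_num, fun G _ _ H r hr hidx K hK A hA => ?_⟩
  rw [Real.rpow_ofNat]
  obtain rfl | hr2 : r = 1 ∨ 2 ≤ r := by omega
  · have hKK : K ≤ ((1 : ℕ) * K) ^ 4 := by simpa using le_self_pow₀ hK (by norm_num)
    exact ⟨A, by simp [Subgroup.index_eq_one.1 hidx], hA.mono hKK, (controls_self hK).mono hKK⟩
  · have : H.FiniteIndex := ⟨by omega⟩
    set x := (r : ℝ) * K
    have hrx : (r : ℝ) ≤ x := le_mul_of_one_le_right (by positivity) hK
    have hKx : K ≤ x := le_mul_of_one_le_left (by linarith) (mod_cast hr)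
    have hx2 : 2 ≤ x := le_trans (mod_cast hr2) hrx
    have hxx3 : x ≤ x ^ 3 := le_self_pow₀ (by linarith) (by norm_num)
    have hx3 : 2 * x ^ 3 ≤ x ^ 4 := by
      rw [pow_succ x 3, mul_comm _ x]; gcongr
    have hK3 : 2 * K ^ 3 ≤ x ^ 4 := le_trans (by gcongr) hx3
    have hmax : max K (2 * H.index) ≤ x ^ 4 := by
      rw [hidx]
      exact max_le (by linarith) (by linarith)
    exact ⟨_, fun s hs => (mem_filter.1 hs).2, (hA.filter_mem_subgroup H).mono hK3,
      (hA.controls_filter_mem_subgroup H).mono hmax⟩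
end

section
/- There exists an absolute constant C > 0 with the following property. Let G and H be groups and let π : G → H be a group homomorphism. Let K ≥ 1 and let A ⊆ G be a finite nonempty set with |A³| ≤ K|A|. Then |π(A)³| ≤ K^C |π(A)|. -/
/-!
Pick a fibre `F = A ∩ π⁻¹(t)` of size at least `|A| / |π(A)|`. Translates of `F` by elements of
`A³` lying over distinct points of `π(A)³` are disjoint subsets of `A⁴`, so
`|π(A)³| |F| ≤ |A⁴| ≤ K⁶ |A| ≤ K⁶ |π(A)| |F|`, the middle step being the Plünnecke–Ruzsa-type
bound on powers of a set of small tripling.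
-/

open Finset Pointwise

namespace Finset

lemma exists_card_le_card_image_mul_card_fiber {α β : Type*} [DecidableEq β] (f : α → β)
    {A : Finset α} (hA : A.Nonempty) :
    ∃ b, #A ≤ #(A.image f) * #{a ∈ A | f a = b} := by
  obtain ⟨b, -, hmax⟩ := (A.image f).exists_max_image (fun b ↦ #{a ∈ A | f a = b})
    (hA.image f)
  refine ⟨b, ?_⟩
  calc #A = ∑ c ∈ A.image f, #{a ∈ A | f a = c} := card_eq_sum_card_image f A
    _ ≤ #(A.image f) • #{a ∈ A | f a = b} := sum_le_card_nsmul _ _ _ hmax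
    _ = #(A.image f) * #{a ∈ A | f a = b} := smul_eq_mul _ _

variable {G H : Type*} [Group G] [Group H] [DecidableEq G] [DecidableEq H]

lemma card_image_mul_card_le_card_mul_of_mapsTo_singleton (π : G →* H) (S : Finset G)
    {F : Finset G} {t : H} (hF : ∀ x ∈ F, π x = t) :
    #(S.image π) * #F ≤ #(S * F) := by
  obtain rfl | ⟨x₀, hx₀⟩ := F.eq_empty_or_nonempty
  · simp
  have hfibre : ∀ u ∈ (S * F).image π, #F ≤ #{g ∈ S * F | π g = u} := by
    simp only [mem_image, mem_mul]
    rintro _ ⟨_, ⟨s, hs, x, hx, rfl⟩, rfl⟩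
    rw [← card_smul_finset s F]
    refine card_le_card fun g hg ↦ ?_
    obtain ⟨y, hy, rfl⟩ := mem_smul_finset.mp hg
    simp only [mem_filter, smul_eq_mul, map_mul, hF x hx, hF y hy, and_true]
    exact mul_mem_mul hs hy
  have himage : #((S * F).image π) = #(S.image π) := by
    have hFt : F.image π = {t} :=
      eq_singleton_iff_unique_mem.mpr ⟨hF x₀ hx₀ ▸ mem_image_of_mem π hx₀, by simpa using hF⟩
    rw [image_mul, hFt, mul_singleton, card_smul_finset]
  calc #(S.image π) * #F = #((S * F).image π) * #F := by rw [himage]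
    _ ≤ ∑ u ∈ (S * F).image π, #{g ∈ S * F | π g = u} := card_nsmul_le_sum _ _ _ hfibre
    _ = #(S * F) := (card_eq_sum_card_image π (S * F)).symm

end Finset

theorem small_tripling_preserved_under_homomorphisms :
    ∃ C : ℝ, 0 < C ∧
      ∀ (G H : Type) [Group G] [Group H] [DecidableEq G] [DecidableEq H],
        ∀ (π : G →* H) (K : ℝ), 1 ≤ K → ∀ A : Finset G, A.Nonempty →
          ((A * A * A).card : ℝ) ≤ K * A.card →
          (((A.image π) * (A.image π) * (A.image π)).card : ℝ) ≤ K ^ C * (A.image π).card := by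
  refine ⟨6, by norm_num, fun G H _ _ _ _ π K hK A hA hA3 ↦ ?_⟩
  set B := A.image π
  obtain ⟨t, hfibre⟩ := exists_card_le_card_image_mul_card_fiber π hA
  set F := {a ∈ A | π a = t}
  have hF : 0 < #F := Nat.pos_of_mul_pos_left (hA.card_pos.trans_le hfibre)
  have hA4 : (#(A * A * A * A) : ℝ) ≤ K ^ 6 * #A := by
    simpa [mul_assoc] using small_alternating_pow_of_small_tripling (A := A) (m := 4)
      (by norm_num) (by rwa [pow_three, ← mul_assoc]) (fun _ ↦ 1) fun _ ↦ by norm_num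
  have hB3 : #(B * B * B) * #F ≤ #(A * A * A * A) := by
    rw [← image_mul, ← image_mul]
    exact (card_image_mul_card_le_card_mul_of_mapsTo_singleton π _ fun x hx ↦
      (mem_filter.mp hx).2).trans (card_le_card (mul_subset_mul_left (filter_subset _ _)))
  rw [Real.rpow_ofNat]
  refine le_of_mul_le_mul_right ?_ (Nat.cast_pos.mpr hF)
  calc (#(B * B * B) : ℝ) * #F ≤ #(A * A * A * A) := mod_cast hB3
    _ ≤ K ^ 6 * #A := hA4
    _ ≤ K ^ 6 * (#B * #F) := by gcongr; exact_mod_cast hfibre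
    _ = K ^ 6 * #B * #F := by ring
end

section
/- For every integer n ≥ 2 there exists a constant C_n > 0 with the following property. Let G be a group, let A ⊆ G be a finite symmetric set containing the identity with |A³| ≤ K|A| for some K ≥ 1, and let H ≤ G be a subgroup. Then |A² ∩ H| ≤ |Aⁿ ∩ H| ≤ K^{C_n}|A² ∩ H|. -/
/-!
Let `B = Aⁿ ∩ H`. Since `B * A ⊆ Aⁿ⁺¹` and small tripling of the symmetric set `A` gives
`|Aⁿ⁺¹| ≤ K ^ (n - 1) |A|`, Ruzsa's covering lemma covers `B` by at most `K ^ (n - 1)` left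
translates `f * AA⁻¹ = f * A²` with `f ∈ B ⊆ H`. As `f ∈ H`, each translate meets `H` in
`f * (A² ∩ H)`, so `|Aⁿ ∩ H| ≤ K ^ (n - 1) |A² ∩ H|`.
-/

open Finset Pointwise

lemma Set.ncard_coe_finset_inter {α : Type*} (s : Finset α) (t : Set α)
    [DecidablePred (· ∈ t)] :
    ((s : Set α) ∩ t).ncard = #{x ∈ s | x ∈ t} := by
  rw [← Set.ncard_coe_finset, coe_filter]
  rfl

namespace Finset

variable {G : Type*} [Group G] [DecidableEq G]

lemma inv_eq_self_of_forall_inv_mem {A : Finset G} (h : ∀ a ∈ A, a⁻¹ ∈ A) : A⁻¹ = A :=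
  coe_injective <| by
    rw [coe_inv]
    exact Set.inv_eq_self_iff_inv_subset.2 fun a ha => by simpa using h _ ha

variable {A B : Finset G} {H : Subgroup G} [DecidablePred (· ∈ H)] {K : ℝ}

lemma card_le_mul_card_div_inter_subgroup (hA : A.Nonempty) (hBH : ∀ b ∈ B, b ∈ H)
    (hBA : #(B * A) ≤ K * #A) : #B ≤ K * #{x ∈ A / A | x ∈ H} := by
  obtain ⟨F, hFB, hF, hBF⟩ := ruzsa_covering_mul hA hBA
  have hB_cover : B ⊆ F * {x ∈ A / A | x ∈ H} := by
    intro b hb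
    obtain ⟨f, hf, y, hy, rfl⟩ := mem_mul.1 (hBF hb)
    have hy_mem : y ∈ H := by
      simpa using H.mul_mem (H.inv_mem (hBH f (hFB hf))) (hBH _ hb)
    exact mul_mem_mul hf (mem_filter.2 ⟨hy, hy_mem⟩)
  calc (#B : ℝ) ≤ #F * #{x ∈ A / A | x ∈ H} :=
        mod_cast (card_le_card hB_cover).trans card_mul_le
    _ ≤ K * #{x ∈ A / A | x ∈ H} := by gcongr

lemma card_pow_inter_subgroup_le {n : ℕ} (hn : 2 ≤ n) (hA : A.Nonempty) (hAsymm : A⁻¹ = A)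
    (hA₃ : #(A ^ 3) ≤ K * #A) :
    #{x ∈ A ^ n | x ∈ H} ≤ K ^ (n - 1) * #{x ∈ A ^ 2 | x ∈ H} := by
  have hmul : #({x ∈ A ^ n | x ∈ H} * A) ≤ K ^ (n - 1) * #A :=
    calc (#({x ∈ A ^ n | x ∈ H} * A) : ℝ) ≤ #(A ^ (n + 1)) := by
          rw [pow_succ]
          gcongr
          exact filter_subset _ _
      _ ≤ K ^ (n - 1) * #A := small_pow_of_small_tripling (by omega) hA₃ hAsymm
  have hdiv : A / A = A ^ 2 := by rw [div_eq_mul_inv, hAsymm, sq]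
  simpa [hdiv] using
    card_le_mul_card_div_inter_subgroup hA (fun _ hb => (mem_filter.1 hb).2) hmul

end Finset

theorem sumsets_and_intersections :
    ∀ n : ℕ, 2 ≤ n → ∃ C : ℝ, 0 < C ∧
      ∀ (G : Type) [Group G] [DecidableEq G], ∀ (K : ℝ), 1 ≤ K →
        ∀ A : Finset G, A.Nonempty → (∀ a ∈ A, a⁻¹ ∈ A) → (1 : G) ∈ A →
          ((A * A * A).card : ℝ) ≤ K * A.card →
          ∀ H : Subgroup G,
            ((↑(A ^ 2) ∩ (H : Set G)).ncard : ℝ) ≤ ((↑(A ^ n) ∩ (H : Set G)).ncard : ℝ) ∧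
            ((↑(A ^ n) ∩ (H : Set G)).ncard : ℝ) ≤ K ^ C * (↑(A ^ 2) ∩ (H : Set G)).ncard := by
  intro n hn
  refine ⟨(n - 1 : ℕ), Nat.cast_pos.2 (by omega), ?_⟩
  intro G _ _ K _ A hA hsymm h1 h3 H
  classical
  simp only [Set.ncard_coe_finset_inter, Real.rpow_natCast]
  exact ⟨mod_cast card_le_card (filter_subset_filter _ (pow_subset_pow_right h1 hn)),
    card_pow_inter_subgroup_le hn hA (inv_eq_self_of_forall_inv_mem hsymm) (by rwa [pow_three'])⟩
end

section
/- Let s ≥ 1 and let G be a group generated by finitely many elements x₁, …, x_k. Suppose that every (s+1)-fold nested commutator [x_{i₁}, [x_{i₂}, [x_{i₃}, …, [x_{i_s}, x_{i_{s+1}}]…]]] of the generators (with indices i₁, …, i_{s+1} ∈ {1, …, k}, repetitions allowed) is equal to the identity. Then G is nilpotent of nilpotency class at most s. -/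
/-!
Work with the upper central series `Z₀ ≤ Z₁ ≤ ⋯`. An element `c` lies in `Z_{j+1}` as soon as its
commutators with the generators lie in `Z_j`, because `{y | ⁅y, c⁆ ∈ Z_j}` is a subgroup. Descending
induction on `j` then shows that every nested commutator of `s + 1 - j` generators lies in `Z_j`:
for `j = 0` this is the hypothesis. At `j = s` every generator lies in `Z_s`, so `Z_s = G`, which is
equivalent to `γ_{s+1}(G) = 1`.
-/

/-- The nested commutator `[y₁, [y₂, …, [y_{m-1}, y_m]…]]` of a list of group elements. -/
def nestedComm {G : Type*} [Group G] : List G → G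
  | [] => 1
  | [a] => a
  | a :: b :: rest => a * nestedComm (b :: rest) * a⁻¹ * (nestedComm (b :: rest))⁻¹

open scoped commutatorElement

section

variable {G : Type*} [Group G]

theorem nestedComm_cons_cons (a b : G) (l : List G) :
    nestedComm (a :: b :: l) = ⁅a, nestedComm (b :: l)⁆ :=
  rfl

theorem commutatorElement_mem_of_mem_closure {S : Set G} {N : Subgroup G} [hN : N.Normal]
    {c y : G} (hS : ∀ g ∈ S, ⁅g, c⁆ ∈ N) (hy : y ∈ Subgroup.closure S) : ⁅y, c⁆ ∈ N := by
  induction hy using Subgroup.closure_induction with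
  | mem g hg => exact hS g hg
  | one => simp
  | mul a b _ _ ha hb =>
    rw [commutatorElement_mul_left_eq_conj_mul]
    exact mul_mem (hN.conj_mem _ hb a) ha
  | inv a _ ha =>
    rw [commutatorElement_inv_left, ← commutatorElement_inv]
    simpa using hN.conj_mem _ (inv_mem ha) a⁻¹

theorem mem_upperCentralSeries_succ_of_closure_eq_top {S : Set G} (hS : Subgroup.closure S = ⊤)
    {n : ℕ} {c : G} (h : ∀ g ∈ S, ⁅g, c⁆ ∈ Subgroup.upperCentralSeries G n) :
    c ∈ Subgroup.upperCentralSeries G (n + 1) :=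
  Subgroup.mem_upperCentralSeries_succ_iff.mpr fun y => by
    rw [← commutatorElement_inv]
    exact inv_mem (commutatorElement_mem_of_mem_closure h (hS ▸ Subgroup.mem_top y))

theorem nestedComm_mem_upperCentralSeries {S : Set G} (hS : Subgroup.closure S = ⊤) {s : ℕ}
    (h : ∀ l : List G, l.length = s + 1 → (∀ y ∈ l, y ∈ S) → nestedComm l = 1) :
    ∀ (j : ℕ) (l : List G), l.length + j = s + 1 → (∀ y ∈ l, y ∈ S) →
      nestedComm l ∈ Subgroup.upperCentralSeries G j
  | 0, l, hl, hlS => by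
    rw [h l hl hlS]
    exact one_mem _
  | _ + 1, [], _, _ => one_mem _
  | j + 1, b :: l, hl, hlS => mem_upperCentralSeries_succ_of_closure_eq_top hS fun g hg => by
    rw [← nestedComm_cons_cons]
    refine nestedComm_mem_upperCentralSeries hS h j (g :: b :: l) ?_ ?_
    · simp only [List.length_cons] at hl ⊢
      omega
    · simpa [hg] using hlS

theorem upperCentralSeries_eq_top_of_nestedComm_eq_one {S : Set G} (hS : Subgroup.closure S = ⊤)
    {s : ℕ} (h : ∀ l : List G, l.length = s + 1 → (∀ y ∈ l, y ∈ S) → nestedComm l = 1) :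
    Subgroup.upperCentralSeries G s = ⊤ := by
  rw [eq_top_iff, ← hS, Subgroup.closure_le]
  intro g hg
  exact nestedComm_mem_upperCentralSeries hS h s [g] (by simp [add_comm]) (by simpa using hg)

end

theorem nilpotent_of_nested_commutators_trivial_general
    (s k : ℕ) (G : Type*) [Group G] (x : Fin k → G)
    (hgen : Subgroup.closure (Set.range x) = ⊤)
    (hcomm : ∀ l : List G, l.length = s + 1 → (∀ y ∈ l, y ∈ Set.range x) →
      nestedComm l = 1) :
    (⊤ : Subgroup G).lowerCentralSeries s = ⊥ :=
  Subgroup.lowerCentralSeries_eq_bot_iff_upperCentralSeries_eq_top.mpr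
    (upperCentralSeries_eq_top_of_nestedComm_eq_one hgen hcomm)

theorem nilpotent_of_nested_commutators_trivial
    (s k : ℕ) (hs : 1 ≤ s) (G : Type*) [Group G] (x : Fin k → G)
    (hgen : Subgroup.closure (Set.range x) = ⊤)
    (hcomm : ∀ l : List G, l.length = s + 1 → (∀ y ∈ l, y ∈ Set.range x) →
      nestedComm l = 1) :
    (⊤ : Subgroup G).lowerCentralSeries s = ⊥ :=
  nilpotent_of_nested_commutators_trivial_general s k G x hgen hcomm
end

section
/- Let G be a nilpotent subgroup of GL_n(ℂ). Then every semisimple (i.e. diagonalizable) element of G commutes with every unipotent element of G. -/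
open Matrix

/-- An element of `GL n ℂ` is semisimple if it is diagonalizable over `ℂ`. -/
def IsSemisimpleElt {n : ℕ} (g : GL (Fin n) ℂ) : Prop :=
  ∃ P : GL (Fin n) ℂ, Matrix.IsDiag ((↑(P⁻¹ * g * P) : Matrix (Fin n) (Fin n) ℂ))

/-- An element of `GL n ℂ` is unipotent if `g - 1` is nilpotent. -/
def IsUnipotentElt {n : ℕ} (g : GL (Fin n) ℂ) : Prop :=
  IsNilpotent ((↑g : Matrix (Fin n) (Fin n) ℂ) - 1)

/-!
Induct on `dim V`. As `G` is nilpotent, the iterated commutators `⁅⋯⁅s, u⁆, ⋯, u⁆` end in `1`;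
the last nontrivial one, `k = ⁅x, u⁆`, commutes with `u`, so it is the product of the commuting
unipotent elements `x * u * x⁻¹` and `u⁻¹` and is unipotent itself. It also lies one step further
down the lower central series than `u`, so a downward induction along that series lets us assume
that `k` commutes with `s`. Then the fixed space `W` of `k` is a proper nonzero subspace stable
under `s` and `u`, and by induction on the dimension `⁅s, u⁆` acts trivially on `W` and `V ⧸ W`.
Now run the chain the other way: all iterated commutators `⁅⋯⁅u, s⁆, ⋯, s⁆` act trivially on
`W` and `V ⧸ W`, hence are unipotent, and the last nontrivial one commutes with `s`, hence is
semisimple by the same argument. Being both, it is `1`, a contradiction unless `s` and `u` commute.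
-/

open Module Polynomial

open scoped commutatorElement

section GroupTheory

variable {G M : Type*} [Group G] [Monoid M]

theorem MonoidHom.map_commutatorElement_eq_one_iff (φ : G →* M) (a b : G) :
    φ ⁅a, b⁆ = 1 ↔ Commute (φ a) (φ b) := by
  rw [← φ.coe_toHomUnits, map_commutatorElement, Units.val_eq_one,
    commutatorElement_eq_one_iff_commute, ← Commute.units_val_iff, φ.coe_toHomUnits,
    φ.coe_toHomUnits]

theorem MonoidHom.commute_map_conj_map_inv (φ : G →* M) {x y : G}
    (h : Commute (φ ⁅x, y⁆) (φ y)) : Commute (φ (x * y * x⁻¹)) (φ y⁻¹) := by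
  have hconj : x * y * x⁻¹ = ⁅x, y⁆ * y := by rw [commutatorElement_def]; group
  rw [hconj, map_mul, ← φ.coe_toHomUnits y⁻¹, map_inv]
  exact (h.mul_left (Commute.refl _)).units_inv_right

theorem commutatorElement_mem_lowerCentralSeries_succ (a : G) {b : G} {n : ℕ}
    (hb : b ∈ (⊤ : Subgroup G).lowerCentralSeries n) :
    ⁅a, b⁆ ∈ (⊤ : Subgroup G).lowerCentralSeries (n + 1) := by
  rw [← commutatorElement_inv]
  exact inv_mem (Subgroup.commutator_mem_commutator hb (Subgroup.mem_top a))

theorem iterate_commutatorElement_mem_lowerCentralSeries (x y : G) (n : ℕ) :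
    (fun a ↦ ⁅a, y⁆)^[n] x ∈ (⊤ : Subgroup G).lowerCentralSeries n := by
  induction n with
  | zero => exact Subgroup.mem_top x
  | succ n ih =>
    rw [Function.iterate_succ_apply']
    exact Subgroup.commutator_mem_commutator ih (Subgroup.mem_top y)

theorem Group.IsNilpotent.exists_iterate_commutatorElement_eq_one [Group.IsNilpotent G]
    (x y : G) : ∃ n, (fun a ↦ ⁅a, y⁆)^[n] x = 1 := by
  obtain ⟨n, hn⟩ := Subgroup.nilpotent_iff_lowerCentralSeries.mp ‹_›
  exact ⟨n, Subgroup.mem_bot.mp (hn ▸ iterate_commutatorElement_mem_lowerCentralSeries x y n)⟩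

theorem MonoidHom.commute_or_exists_iterate_commutatorElement [Group.IsNilpotent G]
    (φ : G →* M) (x y : G) :
    Commute (φ x) (φ y) ∨ ∃ j, φ ((fun a ↦ ⁅a, y⁆)^[j + 1] x) ≠ 1 ∧
      Commute (φ ((fun a ↦ ⁅a, y⁆)^[j + 1] x)) (φ y) := by
  classical
  set c : ℕ → G := fun n ↦ (fun a ↦ ⁅a, y⁆)^[n] x
  have hc : ∀ n, c (n + 1) = ⁅c n, y⁆ := fun n ↦ Function.iterate_succ_apply' _ n x
  obtain ⟨n, hn⟩ := Group.IsNilpotent.exists_iterate_commutatorElement_eq_one x y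
  have hex : ∃ n, φ (c (n + 1)) = 1 := ⟨n, by rw [hc, show c n = 1 from hn]; simp⟩
  have hlast := Nat.find_spec hex
  rcases hfind : Nat.find hex with _ | j
  · rw [hfind, hc] at hlast
    exact .inl ((φ.map_commutatorElement_eq_one_iff _ _).mp hlast)
  · rw [hfind, hc] at hlast
    exact .inr ⟨j, Nat.find_min hex (by omega),
      (φ.map_commutatorElement_eq_one_iff _ _).mp hlast⟩

end GroupTheory

section Unipotent

variable {A : Type*} [Ring A]

theorem isNilpotent_units_conj_sub_one (u : Aˣ) {a : A} (ha : IsNilpotent (a - 1)) :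
    IsNilpotent (↑u * a * ↑u⁻¹ - 1) := by
  obtain ⟨n, hn⟩ := ha
  refine ⟨n, ?_⟩
  rw [show (u : A) * a * ↑u⁻¹ - 1 = u * (a - 1) * ↑u⁻¹ by simp [mul_sub, sub_mul],
    Units.conj_pow, hn, mul_zero, zero_mul]

theorem isNilpotent_units_inv_sub_one {u : Aˣ} (hu : IsNilpotent ((u : A) - 1)) :
    IsNilpotent ((↑u⁻¹ : A) - 1) := by
  have h : (↑u⁻¹ : A) - 1 = -(↑u⁻¹ * ((u : A) - 1)) := by simp [mul_sub]
  have hcomm : Commute ((u : A) - 1) ↑u⁻¹ :=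
    ((Commute.refl (u : A)).sub_left (Commute.one_left _)).units_inv_right
  rw [h, isNilpotent_neg_iff]
  exact hcomm.symm.isNilpotent_mul_left hu

theorem Commute.isNilpotent_mul_sub_one {a b : A} (hab : Commute a b)
    (ha : IsNilpotent (a - 1)) (hb : IsNilpotent (b - 1)) : IsNilpotent (a * b - 1) := by
  have h : a * b - 1 = a * (b - 1) + (a - 1) := by noncomm_ring
  have hb' : Commute a (b - 1) := hab.sub_right (Commute.one_right a)
  rw [h]
  refine Commute.isNilpotent_add ?_ (hb'.isNilpotent_mul_left hb) ha
  exact ((Commute.refl a).sub_right (Commute.one_right a)).mul_left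
    (hb'.symm.sub_right (Commute.one_right _))

end Unipotent

namespace Module.End

section CommRing

variable {R M : Type*} [CommRing R] [AddCommGroup M] [Module R M] {f : End R M}

theorem IsSemisimple.units_conj (u : (End R M)ˣ) (hf : f.IsSemisimple) :
    (↑u * f * ↑u⁻¹).IsSemisimple := by
  refine (LinearEquiv.isSemisimple_iff f _ (LinearMap.GeneralLinearGroup.toLinearEquiv u) ?_).mp hf
  ext v
  simp [← mul_apply]

theorem IsSemisimple.mapQ {p : Submodule R M} (hp : p ≤ p.comap f) (hf : f.IsSemisimple) :
    IsSemisimple (p.mapQ p f hp) := by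
  let π : AEval' f →ₗ[R[X]] AEval' (p.mapQ p f hp) :=
    LinearMap.ofAEval _ ((AEval'.of _).toLinearMap ∘ₗ p.mkQ) fun v ↦ by
      simp [AEval'.X_smul_of]
  have : IsSemisimpleModule R[X] (AEval' f) := hf
  exact IsSemisimpleModule.of_surjective π
    (((AEval'.of _).surjective.comp p.mkQ_surjective).comp (AEval'.of f).symm.surjective)

theorem eq_one_of_isSemisimple_of_isNilpotent_sub_one (hs : f.IsSemisimple)
    (hn : IsNilpotent (f - 1)) : f = 1 := by
  rw [← sub_eq_zero]
  refine eq_zero_of_isNilpotent_isSemisimple hn ?_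
  simpa using (isSemisimple_sub_algebraMap_iff (μ := (1 : R))).mpr hs

theorem isNilpotent_restrict_sub_one {p : Submodule R M} (hp : p ∈ invtSubmodule f)
    (hf : IsNilpotent (f - 1)) : IsNilpotent (f.restrict hp - 1) := by
  have h : f.restrict hp - 1 = (f - 1).restrict (fun v hv ↦ p.sub_mem (hp hv) hv) := by
    ext; rfl
  rw [h]
  exact isNilpotent.restrict _ hf

theorem isNilpotent_mapQ_sub_one {p : Submodule R M} (hp : p ≤ p.comap f)
    (hf : IsNilpotent (f - 1)) : IsNilpotent (p.mapQ p f hp - 1) := by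
  have h : p.mapQ p f hp - 1 =
      p.mapQ p (f - 1) (fun v hv ↦ by simpa using p.sub_mem (hp hv) hv) := by
    ext; simp
  rw [h]
  exact IsNilpotent.mapQ _ hf

theorem ker_mem_invtSubmodule_of_commute {g : End R M} (h : Commute f g) :
    LinearMap.ker g ∈ invtSubmodule f := fun v (hv : g v = 0) ↦
  show g (f v) = 0 by rw [← mul_apply, ← h.eq, mul_apply, hv, map_zero]

end CommRing

section Field

variable {K V : Type*} [Field K] [AddCommGroup V] [Module K V] [FiniteDimensional K V]
  {f : End K V}

theorem mem_invtSubmodule_units_inv {u : (End K V)ˣ} {p : Submodule K V}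
    (hp : p ∈ invtSubmodule (u : End K V)) : p ∈ invtSubmodule (↑u⁻¹ : End K V) := by
  have hmap : p.map (u : End K V) = p :=
    Submodule.eq_of_le_of_finrank_eq ((mem_invtSubmodule_iff_map_le _).mp hp)
      ((LinearMap.GeneralLinearGroup.toLinearEquiv u).finrank_map_eq p)
  intro v hv
  rw [← hmap] at hv
  obtain ⟨w, hw, rfl⟩ := hv
  simpa [← mul_apply] using hw

theorem IsSemisimple.units_inv {u : (End K V)ˣ} (hu : (u : End K V).IsSemisimple) :
    (↑u⁻¹ : End K V).IsSemisimple := by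
  rw [isSemisimple_iff] at hu ⊢
  intro p hp
  obtain ⟨q, hq, hpq⟩ := hu p (by simpa using mem_invtSubmodule_units_inv (u := u⁻¹) hp)
  exact ⟨q, mem_invtSubmodule_units_inv hq, hpq⟩

theorem ker_ne_bot_of_isNilpotent [Nontrivial V] (hf : IsNilpotent f) : LinearMap.ker f ≠ ⊥ :=
  fun h ↦ hf.not_isUnit ((LinearMap.isUnit_iff_ker_eq_bot f).mpr h)

end Field

end Module.End

theorem Submodule.finrank_quotient_lt {K V : Type*} [Field K] [AddCommGroup V] [Module K V]
    [FiniteDimensional K V] {W : Submodule K V} (hW : W ≠ ⊥) :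
    finrank K (V ⧸ W) < finrank K V := by
  have := W.finrank_quotient_add_finrank
  have := Submodule.finrank_eq_zero.not.mpr hW
  omega

namespace Representation

variable {K G V : Type*} [Field K] [Group G] [AddCommGroup V] [Module K V]
  (ρ : Representation K G V)

theorem isSemisimple_apply_commutatorElement [PerfectField K] [FiniteDimensional K V] {x y : G}
    (hy : End.IsSemisimple (ρ y)) (h : Commute (ρ ⁅x, y⁆) (ρ y)) :
    End.IsSemisimple (ρ ⁅x, y⁆) := by
  have hconj : End.IsSemisimple (ρ (x * y * x⁻¹)) := by
    simpa [← asGroupHom_apply] using hy.units_conj (ρ.asGroupHom x)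
  have hinv : End.IsSemisimple (ρ y⁻¹) := by
    simpa [← asGroupHom_apply] using
      End.IsSemisimple.units_inv (u := ρ.asGroupHom y) (by simpa [asGroupHom_apply])
  rw [commutatorElement_def, map_mul ρ (x * y * x⁻¹)]
  exact End.IsSemisimple.mul_of_commute (ρ.commute_map_conj_map_inv h) hconj hinv

theorem isNilpotent_apply_commutatorElement_sub_one {x y : G} (hy : IsNilpotent (ρ y - 1))
    (h : Commute (ρ ⁅x, y⁆) (ρ y)) : IsNilpotent (ρ ⁅x, y⁆ - 1) := by
  have hconj : IsNilpotent (ρ (x * y * x⁻¹) - 1) := by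
    simpa [← asGroupHom_apply] using isNilpotent_units_conj_sub_one (ρ.asGroupHom x) hy
  have hinv : IsNilpotent (ρ y⁻¹ - 1) := by
    simpa [← asGroupHom_apply] using
      isNilpotent_units_inv_sub_one (u := ρ.asGroupHom y) (by simpa [asGroupHom_apply])
  rw [commutatorElement_def, map_mul ρ (x * y * x⁻¹)]
  exact (ρ.commute_map_conj_map_inv h).isNilpotent_mul_sub_one hconj hinv

theorem commute_or_exists_mem_lowerCentralSeries_succ [Group.IsNilpotent G] (s : G) {u : G} {m : ℕ}
    (hum : u ∈ (⊤ : Subgroup G).lowerCentralSeries m) (hu : IsNilpotent (ρ u - 1)) :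
    Commute (ρ s) (ρ u) ∨ ∃ k ∈ (⊤ : Subgroup G).lowerCentralSeries (m + 1),
      IsNilpotent (ρ k - 1) ∧ ρ k ≠ 1 ∧ Commute (ρ k) (ρ u) := by
  refine (ρ.commute_or_exists_iterate_commutatorElement s u).imp id ?_
  rintro ⟨j, hk1, hku⟩
  rw [Function.iterate_succ_apply'] at hk1 hku
  exact ⟨_, commutatorElement_mem_lowerCentralSeries_succ _ hum,
    ρ.isNilpotent_apply_commutatorElement_sub_one hu hku, hk1, hku⟩

theorem exists_invariant_submodule_ne_bot_ne_top [FiniteDimensional K V] {s u k : G}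
    (hk : IsNilpotent (ρ k - 1)) (hk1 : ρ k ≠ 1) (hsk : Commute (ρ s) (ρ k))
    (huk : Commute (ρ u) (ρ k)) :
    ∃ H : Subgroup G, s ∈ H ∧ u ∈ H ∧ ∃ W : Submodule K V,
      (∀ h : H, W ≤ W.comap (ρ h)) ∧ W ≠ ⊥ ∧ W ≠ ⊤ := by
  let H : Subgroup G := (Subgroup.centralizer {ρ.asGroupHom k}).comap ρ.asGroupHom
  have hH : ∀ g, g ∈ H ↔ Commute (ρ g) (ρ k) := fun g ↦ by
    rw [Subgroup.mem_comap, Subgroup.mem_centralizer_singleton_iff]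
    exact Commute.units_val_iff.symm
  have : Nontrivial V := by
    by_contra hV
    rw [not_nontrivial_iff_subsingleton] at hV
    exact hk1 (Subsingleton.elim _ _)
  refine ⟨H, (hH s).mpr hsk, (hH u).mpr huk, LinearMap.ker (ρ k - 1),
    fun h ↦ End.ker_mem_invtSubmodule_of_commute (((hH h).mp h.2).sub_right (Commute.one_right _)),
    End.ker_ne_bot_of_isNilpotent hk, fun htop ↦ hk1 ?_⟩
  exact sub_eq_zero.mp (LinearMap.ker_eq_top.mp htop)

section Invariant

variable {ρ} {W : Submodule K V} (hW : ∀ g, W ≤ W.comap (ρ g))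
include hW

theorem isNilpotent_apply_sub_one_of_subrepresentation_eq_one_of_quotient_eq_one {g : G}
    (hsub : ρ.subrepresentation W hW g = 1) (hquot : ρ.quotient W hW g = 1) :
    IsNilpotent (ρ g - 1) := by
  have hfix : ∀ w ∈ W, (ρ g - 1) w = 0 := fun w hw ↦ by
    simpa [sub_eq_zero] using congr(($hsub ⟨w, hw⟩ : V))
  have hmove : ∀ v, (ρ g - 1) v ∈ W := fun v ↦ by
    simpa [Submodule.Quotient.eq] using congr($hquot (W.mkQ v))
  refine ⟨2, LinearMap.ext fun v ↦ ?_⟩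
  rw [pow_two, End.mul_apply, hfix _ (hmove v), LinearMap.zero_apply]

theorem commute_of_subrepresentation_eq_one_of_quotient_eq_one [PerfectField K]
    [FiniteDimensional K V] [Group.IsNilpotent G] {s u : G} (hs : End.IsSemisimple (ρ s))
    (hsub : ρ.subrepresentation W hW ⁅s, u⁆ = 1) (hquot : ρ.quotient W hW ⁅s, u⁆ = 1) :
    Commute (ρ s) (ρ u) := by
  let N := (ρ.subrepresentation W hW).ker ⊓ (ρ.quotient W hW).ker
  have hN : ∀ j, (fun a ↦ ⁅a, s⁆)^[j + 1] u ∈ N := by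
    intro j
    induction j with
    | zero =>
      rw [Function.iterate_one, ← commutatorElement_inv]
      exact inv_mem ⟨hsub, hquot⟩
    | succ j ih =>
      rw [Function.iterate_succ_apply']
      exact Subgroup.commutator_le_left N ⊤
        (Subgroup.commutator_mem_commutator ih (Subgroup.mem_top s))
  refine (ρ.commute_or_exists_iterate_commutatorElement u s).elim Commute.symm ?_
  rintro ⟨j, hne, hcomm⟩
  refine absurd (End.eq_one_of_isSemisimple_of_isNilpotent_sub_one ?_ ?_) hne
  · rw [Function.iterate_succ_apply'] at hcomm ⊢
    exact ρ.isSemisimple_apply_commutatorElement hs hcomm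
  · exact isNilpotent_apply_sub_one_of_subrepresentation_eq_one_of_quotient_eq_one hW
      (hN j).1 (hN j).2

end Invariant

theorem commute_of_isSemisimple_of_isNilpotent_sub_one [PerfectField K] [FiniteDimensional K V]
    [Group.IsNilpotent G] {s u : G} (hs : End.IsSemisimple (ρ s))
    (hu : IsNilpotent (ρ u - 1)) : Commute (ρ s) (ρ u) := by
  induction hn : finrank K V using Nat.strong_induction_on generalizing G V with
  | _ n ih =>
  obtain ⟨c, hc⟩ := Subgroup.nilpotent_iff_lowerCentralSeries.mp ‹Group.IsNilpotent G›
  suffices key : ∀ i, ∀ u ∈ (⊤ : Subgroup G).lowerCentralSeries (c - i),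
      IsNilpotent (ρ u - 1) → Commute (ρ s) (ρ u) from key c u (by simp) hu
  intro i
  induction i with
  | zero =>
    intro u hu _
    rw [Nat.sub_zero, hc, Subgroup.mem_bot] at hu
    simp [hu]
  | succ i ihi =>
  intro u hum hu
  obtain h | ⟨k, hkm, hk, hk1, hku⟩ := ρ.commute_or_exists_mem_lowerCentralSeries_succ s hum hu
  · exact h
  have hsk : Commute (ρ s) (ρ k) :=
    ihi k (Subgroup.lowerCentralSeries_antitone _ (by omega) hkm) hk
  obtain ⟨H, hsH, huH, W, hW, hW_bot, hW_top⟩ :=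
    ρ.exists_invariant_submodule_ne_bot_ne_top hk hk1 hsk hku.symm
  let s' : H := ⟨s, hsH⟩
  let u' : H := ⟨u, huH⟩
  refine commute_of_subrepresentation_eq_one_of_quotient_eq_one (ρ := ρ.comp H.subtype) hW
    (s := s') (u := u') hs ?_ ?_ <;> rw [MonoidHom.map_commutatorElement_eq_one_iff]
  · exact ih _ (hn ▸ Submodule.finrank_lt hW_top) _ (hs.restrict (hW s'))
      (End.isNilpotent_restrict_sub_one (hW u') hu) rfl
  · exact ih _ (hn ▸ Submodule.finrank_quotient_lt hW_bot) _ (hs.mapQ (hW s'))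
      (End.isNilpotent_mapQ_sub_one (hW u') hu) rfl

end Representation

theorem Matrix.isSemisimple_toLin'_diagonal {K ι : Type*} [Field K] [Fintype ι] [DecidableEq ι]
    (d : ι → K) : End.IsSemisimple (Matrix.toLin' (Matrix.diagonal d)) := by
  classical
  refine End.isSemisimple_of_squarefree_aeval_eq_zero
    (p := ∏ a ∈ Finset.univ.image d, (X - C a)) ?_ ?_
  · exact (separable_prod_X_sub_C_iff' (f := fun a ↦ a).mpr fun _ _ _ _ h ↦ h).squarefree
  · refine LinearMap.pi_ext fun i x ↦ ?_
    have hi : Matrix.toLin' (Matrix.diagonal d) (Pi.single i x) = d i • Pi.single i x := by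
      ext j
      rcases eq_or_ne j i with rfl | hj <;> simp [Matrix.mulVec_diagonal, *]
    rw [End.aeval_apply_of_mem_apply_eq_smul hi, eval_prod,
      Finset.prod_eq_zero (Finset.mem_image_of_mem d (Finset.mem_univ i)) (by simp), zero_smul,
      LinearMap.zero_apply]

theorem IsSemisimpleElt.isSemisimple_toLin' {n : ℕ} {g : GL (Fin n) ℂ}
    (hg : IsSemisimpleElt g) : End.IsSemisimple (Matrix.toLin' (g : Matrix (Fin n) (Fin n) ℂ)) := by
  obtain ⟨P, hP⟩ := hg
  have hD := Matrix.isSemisimple_toLin'_diagonal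
    (Matrix.diag (↑(P⁻¹ * g * P) : Matrix (Fin n) (Fin n) ℂ))
  rw [hP.diagonal_diag] at hD
  rw [show g = P * (P⁻¹ * g * P) * P⁻¹ by group, Units.val_mul, Units.val_mul,
    Matrix.toLin'_mul, Matrix.toLin'_mul]
  exact hD.units_conj (Matrix.GeneralLinearGroup.toLin P)

theorem semisimple_commutes_with_unipotent_in_nilpotent_linear_group
    (n : ℕ) (G : Subgroup (GL (Fin n) ℂ)) (hG : Group.IsNilpotent ↥G)
    (g h : GL (Fin n) ℂ) (hg : g ∈ G) (hh : h ∈ G)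
    (hgs : IsSemisimpleElt g) (hhu : IsUnipotentElt h) :
    g * h = h * g := by
  let ρ : Representation ℂ G (Fin n → ℂ) :=
    (Units.coeHom _).comp (Matrix.GeneralLinearGroup.toLin.toMonoidHom.comp G.subtype)
  have hρ : ∀ x : G,
      ρ x = Matrix.toLinAlgEquiv' ((x : GL (Fin n) ℂ) : Matrix (Fin n) (Fin n) ℂ) := fun _ ↦ rfl
  have hu : IsNilpotent (ρ ⟨h, hh⟩ - 1) := by
    rw [hρ, ← map_one Matrix.toLinAlgEquiv', ← map_sub]
    exact hhu.map Matrix.toLinAlgEquiv'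
  have hcomm := ρ.commute_of_isSemisimple_of_isNilpotent_sub_one (s := ⟨g, hg⟩)
    hgs.isSemisimple_toLin' hu
  exact Units.ext (Matrix.toLinAlgEquiv'.injective (by simpa [hρ] using hcomm.eq))
end
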